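/- arXiv:2109.04405 — 6 statements merged into one kernel-verified Lean document; each statement's English description precedes it below -/
import Mathlib

section
/- Fix an integer α ≥ 2 and define the sequence (τ_p) by τ₁ = 1 and τ_{p+1} being the unique positive real root of x^α - x^{α-1} - τ_p^α = 0. Then for all integers p ≥ 1, τ_p ≥ (p + α - 1)/α. -/
/-!
Write `f(x) = x^α - x^(α-1) = x^(α-1) (x - 1)`, so that `τ (p+1)` solves `f(x) = τ p ^ α`.
Bernoulli's inequality `a^α - α a^(α-1) b ≤ (a - b)^α` at `a = c + 1/α`, `b = 1/α` gives
`f(c + 1/α) ≤ c^α`. Since `f` is strictly increasing on `[1, ∞)` and nonpositive on `[0, 1]`,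
a lower bound `τ p ≥ c ≥ 1` therefore propagates to `τ (p+1) ≥ c + 1/α`.
-/

open Set

lemma pow_sub_pow_pred_eq_mul (n : ℕ) (hn : 1 ≤ n) (x : ℝ) :
    x ^ n - x ^ (n - 1) = x ^ (n - 1) * (x - 1) := by
  obtain ⟨k, rfl⟩ := Nat.exists_eq_add_of_le' hn
  simp only [Nat.add_sub_cancel]
  ring

lemma pow_sub_pow_pred_add_inv_le (n : ℕ) {c : ℝ} (hc : 0 ≤ c) :
    (c + 1 / n) ^ n - (c + 1 / n) ^ (n - 1) ≤ c ^ n := by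
  rcases eq_or_ne n 0 with rfl | hn
  · simp
  have hbern := pow_add_mul_le_add_pow (a := c + 1 / n) (b := -(1 / n)) (by positivity)
    (by linarith [one_div_nonneg.mpr (n.cast_nonneg : (0 : ℝ) ≤ n)]) n
  rw [add_neg_cancel_right] at hbern
  calc (c + 1 / n) ^ n - (c + 1 / n) ^ (n - 1)
      = (c + 1 / n) ^ n + n * (c + 1 / n) ^ (n - 1) * -(1 / n) := by field_simp; ring
    _ ≤ c ^ n := hbern

lemma strictMonoOn_pow_sub_pow_pred (n : ℕ) (hn : 1 ≤ n) :
    StrictMonoOn (fun x : ℝ => x ^ n - x ^ (n - 1)) (Ici 1) := by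
  intro x hx y hy hxy
  simp only [mem_Ici] at hx hy
  simp only [pow_sub_pow_pred_eq_mul n hn]
  exact mul_lt_mul' (pow_le_pow_left₀ (by linarith) hxy.le _) (by linarith) (by linarith)
    (by positivity)

lemma one_lt_of_pos_pow_sub_pow_pred (n : ℕ) (hn : 1 ≤ n) {x : ℝ} (hx : 0 ≤ x)
    (h : 0 < x ^ n - x ^ (n - 1)) : 1 < x := by
  by_contra! hx1
  rw [pow_sub_pow_pred_eq_mul n hn] at h
  nlinarith [pow_nonneg hx (n - 1)]

/-- If `τ 1 = 1` and for every `p ≥ 1`, `τ (p+1)` is the (unique) positive real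
root of `x^α - x^(α-1) - (τ p)^α = 0`, then `τ p ≥ (p + α - 1)/α` for all `p ≥ 1`. -/
theorem tau_lower_bound (α : ℕ) (hα : 2 ≤ α) (τ : ℕ → ℝ) (h1 : τ 1 = 1)
    (hrec : ∀ p : ℕ, 1 ≤ p →
      0 < τ (p + 1) ∧ τ (p + 1) ^ α - τ (p + 1) ^ (α - 1) - τ p ^ α = 0) :
    ∀ p : ℕ, 1 ≤ p → ((p : ℝ) + α - 1) / α ≤ τ p := by
  have hα1 : 1 ≤ α := by omega
  have hα0 : (0 : ℝ) < α := by positivity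
  intro p hp
  induction p, hp using Nat.le_induction with
  | base => simp [h1, hα0.ne']
  | succ p hp ih =>
    obtain ⟨hpos, hroot⟩ := hrec p hp
    set c := ((p : ℝ) + α - 1) / α
    have hc : 1 ≤ c := by
      rw [le_div_iff₀ hα0]
      linarith [show (1 : ℝ) ≤ p by exact_mod_cast hp]
    have hstep : (c + 1 / α) ^ α - (c + 1 / α) ^ (α - 1)
        ≤ τ (p + 1) ^ α - τ (p + 1) ^ (α - 1) :=
      (pow_sub_pow_pred_add_inv_le α (by linarith)).trans
        (by linarith [pow_le_pow_left₀ (by linarith) ih α])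
    have hτ1 : 1 < τ (p + 1) :=
      one_lt_of_pos_pow_sub_pow_pred α hα1 hpos.le
        (by linarith [pow_pos (show 0 < τ p by linarith) α])
    have hbound := (strictMonoOn_pow_sub_pow_pred α hα1).le_iff_le
      (show 1 ≤ c + 1 / α by linarith [one_div_pos.mpr hα0]) hτ1.le |>.mp hstep
    calc ((↑(p + 1) : ℝ) + α - 1) / α = c + 1 / α := by unfold c; push_cast; field_simp; ring
      _ ≤ τ (p + 1) := hbound
end

section
/- For every integer α ≥ 2 and every integer p ≥ 1, the inequality ((p+α)/α)^α - ((p+α)/α)^{α-1} - ((p+α-1)/α)^α < 0 holds. -/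
private lemma aux_nat (b : ℕ) : ∀ k, 1 ≤ k → k < b → (b+1)^k * (b-k) < b^(k+1) := by
  intro k
  induction k with
  | zero => omega
  | succ n ih =>
    intro _ hkb
    rcases Nat.eq_zero_or_pos n with h | h
    · subst h
      obtain ⟨m, rfl⟩ : ∃ m, b = m + 2 := ⟨b - 2, by omega⟩
      have h1 : m + 2 - 1 = m + 1 := by omega
      rw [h1, pow_one]
      have h2 : (m+2)^(1+1) = (m+2)*(m+2) := by ring
      rw [h2]
      nlinarith
    · have hnb : n < b := by omega
      have key : (b+1) * (b-(n+1)) < b * (b-n) := by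
        obtain ⟨d, rfl⟩ : ∃ d, b = n + 1 + d := ⟨b - (n+1), by omega⟩
        have h1 : n + 1 + d - (n+1) = d := by omega
        have h2 : n + 1 + d - n = d + 1 := by omega
        rw [h1, h2]
        nlinarith
      calc (b+1)^(n+1) * (b-(n+1)) = (b+1)^n * ((b+1) * (b-(n+1))) := by ring
        _ ≤ (b+1)^n * (b * (b-n)) := Nat.mul_le_mul_left _ (Nat.le_of_lt key)
        _ = b * ((b+1)^n * (b-n)) := by ring
        _ < b * b^(n+1) := mul_lt_mul_of_pos_left (ih h hnb) (by omega)
        _ = b^(n+2) := by ring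

/-- For every integer `α ≥ 2` and every integer `p ≥ 1`,
`((p+α)/α)^α - ((p+α)/α)^(α-1) - ((p+α-1)/α)^α < 0`. -/
theorem key_induction_inequality (α : ℕ) (hα : 2 ≤ α) (p : ℕ) (hp : 1 ≤ p) :
    (((p : ℝ) + α) / α) ^ α - (((p : ℝ) + α) / α) ^ (α - 1)
      - (((p : ℝ) + α - 1) / α) ^ α < 0 := by
  obtain ⟨k, rfl⟩ : ∃ k, α = k + 1 := ⟨α - 1, by omega⟩
  have hk : 1 ≤ k := by omega
  have hN : (p + k + 1)^k * p < (p + k)^(k+1) := by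
    have := aux_nat (p + k) k hk (by omega)
    have hsub : p + k - k = p := by omega
    rwa [hsub] at this
  have hR : ((p:ℝ) + k + 1)^k * p < ((p:ℝ) + k)^(k+1) := by
    exact_mod_cast hN
  have hC : ((k:ℝ) + 1) ≠ 0 := by positivity
  have hB : ((p:ℝ) + (k+1:ℕ) - 1) = (p:ℝ) + k := by push_cast; ring
  have hA : ((p:ℝ) + (k+1:ℕ)) = (p:ℝ) + k + 1 := by push_cast; ring
  have hcast : ((k+1 : ℕ) : ℝ) = (k:ℝ) + 1 := by push_cast; ring
  have hs : (k + 1) - 1 = k := by omega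
  rw [hB, hA, hcast, hs]
  have heq : (((p:ℝ) + k + 1)/((k:ℝ)+1))^(k+1) - (((p:ℝ) + k + 1)/((k:ℝ)+1))^k
      = (((p:ℝ) + k + 1)^k * p)/((k:ℝ)+1)^(k+1) := by
    rw [pow_succ, div_pow]
    field_simp
    ring
  have hlt : (((p:ℝ) + k + 1)^k * p)/((k:ℝ)+1)^(k+1)
      < (((p:ℝ) + k)/((k:ℝ)+1))^(k+1) := by
    rw [div_pow, div_lt_div_iff₀ (by positivity) (by positivity)]
    exact mul_lt_mul_of_pos_right hR (by positivity)
  linarith [heq, hlt]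
end

section
/- For all integers α ≥ 2 and real p ≥ 1, the function f₂(p) = (α-1)·ln((p+α)/α) + ln(p/α) - α·ln((p+α-1)/α) is strictly negative. -/
/-!
Strict concavity of `log` at the two points `p + α` and `p`, with weights `(α - 1)/α` and `1/α`
whose barycentre is `p + α - 1`, gives `(α - 1) log (p + α) + log p < α log (p + α - 1)`.
The normalisations by `α` contribute `-(α - 1) - 1 + α = 0` copies of `log α`.
-/

open Real

lemma sub_one_mul_log_add_add_log_lt {α p : ℝ} (hα : 1 < α) (hp : 0 < p) :
    (α - 1) * log (p + α) + log p < α * log (p + α - 1) := by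
  have hα₀ : 0 < α := by linarith
  have hconcave := strictConcaveOn_log_Ioi.2 (Set.mem_Ioi.2 (by linarith : 0 < p + α))
    (Set.mem_Ioi.2 hp) (by linarith : p + α ≠ p) (div_pos (sub_pos.2 hα) hα₀)
    (one_div_pos.2 hα₀) (by field_simp; ring)
  have hmid : (α - 1) / α * (p + α) + 1 / α * p = p + α - 1 := by field_simp; ring
  simp only [smul_eq_mul, hmid] at hconcave
  calc (α - 1) * log (p + α) + log p
      = α * ((α - 1) / α * log (p + α) + 1 / α * log p) := by field_simp
    _ < α * log (p + α - 1) := mul_lt_mul_of_pos_left hconcave hα₀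

/-- For all integers `α ≥ 2` and real `p ≥ 1`,
`(α-1)·ln((p+α)/α) + ln(p/α) - α·ln((p+α-1)/α) < 0`. -/
theorem f2_neg (α : ℕ) (hα : 2 ≤ α) (p : ℝ) (hp : 1 ≤ p) :
    ((α : ℝ) - 1) * Real.log ((p + α) / α) + Real.log (p / α)
      - (α : ℝ) * Real.log ((p + α - 1) / α) < 0 := by
  have hα' : (1 : ℝ) < α := by exact_mod_cast hα
  have hp₀ : 0 < p := by linarith
  have key := sub_one_mul_log_add_add_log_lt hα' hp₀
  rw [log_div (by linarith) (by linarith), log_div (by linarith) (by linarith),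
    log_div (by linarith) (by linarith)]
  linarith
end

section
/- Let H be a symmetric positive definite n×n real matrix with minimum eigenvalue σ_min(H) > 0. Define f(μ) = ½(Aᵀμ + G)ᵀ H⁻¹ (Aᵀμ + G) + Bᵀμ and ξ(μ) = H⁻¹(-Aᵀμ - G). If ξ* = ξ(μ*) for a minimizer μ* of f over {μ ≥ 0}, then for any feasible μ ≥ 0, ‖ξ(μ) - ξ*‖² ≤ (2/σ_min(H)) · (f(μ) - f(μ*)). -/
/-!
Along the segment from `μ*` to a feasible `μ` the dual objective is exactly the quadratic
`f μ* + t g + t² q / 2`, where `q = uᵀ H⁻¹ u` for `u = Aᵀ (μ - μ*)`. Minimality of `μ*` over the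
convex feasible set forces the slope `g` to be nonnegative, so `q / 2 ≤ f μ - f μ*`. On the primal
side `ξ μ - ξ μ* = -H⁻¹ u =: -w`, and `q = wᵀ H w ≥ σ_min(H) ‖w‖²` because `H - σ_min(H) I` is
positive semidefinite.
-/

open Matrix Set Filter Topology
open scoped ComplexOrder

lemma nonneg_of_forall_mem_Ioc_nonneg_add_mul {g c : ℝ}
    (h : ∀ t ∈ Ioc (0 : ℝ) 1, 0 ≤ g + t * c) : 0 ≤ g := by
  have hlim : Tendsto (fun t : ℝ => g + t * c) (𝓝[>] 0) (𝓝 g) := by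
    have hcont : Continuous fun t : ℝ => g + t * c := by fun_prop
    simpa using (hcont.tendsto 0).mono_left nhdsWithin_le_nhds
  exact ge_of_tendsto hlim (eventually_of_mem (Ioc_mem_nhdsGT one_pos) h)

lemma half_le_sub_of_isMinOn_of_add_smul_sub {E : Type*} [AddCommGroup E] [Module ℝ E]
    {S : Set E} (hS : Convex ℝ S) {f : E → ℝ} {x y : E} (hx : x ∈ S) (hy : y ∈ S)
    (hmin : IsMinOn f S x) {g q : ℝ}
    (hline : ∀ t : ℝ, f (x + t • (y - x)) = f x + t * g + t ^ 2 / 2 * q) :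
    q / 2 ≤ f y - f x := by
  have hg : 0 ≤ g := by
    refine nonneg_of_forall_mem_Ioc_nonneg_add_mul (c := q / 2) fun t ht => ?_
    have hle : f x ≤ f (x + t • (y - x)) :=
      hmin (hS.add_smul_sub_mem hx hy (Ioc_subset_Icc_self ht))
    rw [hline] at hle
    nlinarith [ht.1]
  have hend := hline 1
  rw [one_smul, add_sub_cancel] at hend
  linarith

namespace Matrix

variable {n : Type*} [Fintype n]

lemma IsSymm.dotProduct_mulVec_comm {R : Type*} [CommSemiring R] {M : Matrix n n R}
    (hM : M.IsSymm) (x y : n → R) : x ⬝ᵥ M *ᵥ y = y ⬝ᵥ M *ᵥ x := by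
  rw [dotProduct_mulVec, ← mulVec_transpose, hM.eq, dotProduct_comm]

lemma IsSymm.add_dotProduct_mulVec_add {R : Type*} [CommRing R] {M : Matrix n n R}
    (hM : M.IsSymm) (x y : n → R) :
    (x + y) ⬝ᵥ M *ᵥ (x + y) = x ⬝ᵥ M *ᵥ x + 2 * (x ⬝ᵥ M *ᵥ y) + y ⬝ᵥ M *ᵥ y := by
  rw [mulVec_add, add_dotProduct, dotProduct_add, dotProduct_add, hM.dotProduct_mulVec_comm y x]
  ring

lemma inv_mulVec_dotProduct_mulVec_inv_mulVec [DecidableEq n] {R : Type*} [CommRing R]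
    {M : Matrix n n R} (hM : IsUnit M) (x : n → R) :
    (M⁻¹ *ᵥ x) ⬝ᵥ M *ᵥ (M⁻¹ *ᵥ x) = x ⬝ᵥ M⁻¹ *ᵥ x := by
  rw [mulVec_mulVec, mul_nonsing_inv M (M.isUnit_iff_isUnit_det.mp hM), one_mulVec,
    dotProduct_comm]

variable [DecidableEq n] {𝕜 : Type*} [RCLike 𝕜]

lemma IsHermitian.posSemidef_sub_smul_one {A : Matrix n n 𝕜} (hA : A.IsHermitian) {c : ℝ}
    (hc : ∀ i, c ≤ hA.eigenvalues i) : (A - (c : 𝕜) • (1 : Matrix n n 𝕜)).PosSemidef := by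
  have hshift : diagonal (RCLike.ofReal ∘ hA.eigenvalues) - (c : 𝕜) • (1 : Matrix n n 𝕜) =
      diagonal (RCLike.ofReal ∘ fun i => hA.eigenvalues i - c) := by
    rw [← diagonal_one, ← diagonal_smul, diagonal_sub]
    simp [Function.comp_def]
  rw [hA.spectral_theorem, ← map_one (Unitary.conjStarAlgAut 𝕜 _ hA.eigenvectorUnitary),
    ← map_smul, ← map_sub, hshift]
  simp [Unitary.conjStarAlgAut_apply, Unitary.isUnit_coe.posSemidef_star_right_conjugate_iff, hc]

lemma IsHermitian.iInf_eigenvalues_mul_dotProduct_self_le {A : Matrix n n ℝ}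
    (hA : A.IsHermitian) (x : n → ℝ) : (⨅ i, hA.eigenvalues i) * (x ⬝ᵥ x) ≤ x ⬝ᵥ A *ᵥ x := by
  have hpsd := hA.posSemidef_sub_smul_one fun i => ciInf_le (Finite.bddBelow_range _) i
  simpa only [star_trivial, Real.ringHom_apply, sub_mulVec, smul_mulVec, one_mulVec,
    dotProduct_sub, dotProduct_smul, smul_eq_mul, sub_nonneg] using hpsd.dotProduct_mulVec_nonneg x

lemma PosDef.iInf_eigenvalues_pos [Nonempty n] {A : Matrix n n 𝕜} (hA : A.PosDef) :
    0 < ⨅ i, hA.isHermitian.eigenvalues i := by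
  obtain ⟨i, hi⟩ := exists_eq_ciInf_of_finite (f := hA.isHermitian.eigenvalues)
  exact hi ▸ hA.eigenvalues_pos i

end Matrix

noncomputable def dualObjective {n m : Type*} [Fintype n] [Fintype m] (A : Matrix m n ℝ)
    (B : m → ℝ) (G : n → ℝ) (M : Matrix n n ℝ) (μ : m → ℝ) : ℝ :=
  1 / 2 * ((Aᵀ *ᵥ μ + G) ⬝ᵥ M *ᵥ (Aᵀ *ᵥ μ + G)) + B ⬝ᵥ μ

lemma dualObjective_add_smul {n m : Type*} [Fintype n] [Fintype m] (A : Matrix m n ℝ)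
    (B : m → ℝ) (G : n → ℝ) {M : Matrix n n ℝ} (hM : M.IsSymm) (μ d : m → ℝ) (t : ℝ) :
    dualObjective A B G M (μ + t • d) = dualObjective A B G M μ
      + t * ((Aᵀ *ᵥ μ + G) ⬝ᵥ M *ᵥ (Aᵀ *ᵥ d) + B ⬝ᵥ d)
      + t ^ 2 / 2 * ((Aᵀ *ᵥ d) ⬝ᵥ M *ᵥ (Aᵀ *ᵥ d)) := by
  have hsplit : Aᵀ *ᵥ (μ + t • d) + G = (Aᵀ *ᵥ μ + G) + t • (Aᵀ *ᵥ d) := by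
    rw [mulVec_add, mulVec_smul]; abel
  simp only [dualObjective, hsplit, hM.add_dotProduct_mulVec_add, mulVec_smul, dotProduct_smul,
    smul_dotProduct, dotProduct_add, smul_eq_mul]
  ring

theorem primal_dual_error_bound_general (n m : ℕ)
    (H : Matrix (Fin n) (Fin n) ℝ) (hH : H.PosDef)
    (A : Matrix (Fin m) (Fin n) ℝ) (B : Fin m → ℝ) (G : Fin n → ℝ)
    (σ : ℝ) (hσ : σ = ⨅ i, hH.isHermitian.eigenvalues i)
    (f : (Fin m → ℝ) → ℝ)
    (hf : ∀ μ, f μ = (1 / 2) * ((Aᵀ.mulVec μ + G) ⬝ᵥ H⁻¹.mulVec (Aᵀ.mulVec μ + G))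
        + B ⬝ᵥ μ)
    (ξ : (Fin m → ℝ) → (Fin n → ℝ))
    (hξ : ∀ μ, ξ μ = H⁻¹.mulVec (-(Aᵀ.mulVec μ) - G))
    (μs : Fin m → ℝ) (hμs : ∀ i, 0 ≤ μs i)
    (hmin : ∀ μ : Fin m → ℝ, (∀ i, 0 ≤ μ i) → f μs ≤ f μ) :
    ∀ μ : Fin m → ℝ, (∀ i, 0 ≤ μ i) →
      (ξ μ - ξ μs) ⬝ᵥ (ξ μ - ξ μs) ≤ (2 / σ) * (f μ - f μs) := by
  intro μ hμ
  rcases isEmpty_or_nonempty (Fin n) with hempty | hnonempty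
  · -- both sides vanish: the dot product is an empty sum and `σ = ⨅` over an empty type is `0`
    simp [hσ, dotProduct]
  set u := Aᵀ *ᵥ (μ - μs)
  obtain rfl : f = dualObjective A B G H⁻¹ := funext hf
  have hgrowth : u ⬝ᵥ H⁻¹ *ᵥ u / 2 ≤ dualObjective A B G H⁻¹ μ - dualObjective A B G H⁻¹ μs :=
    half_le_sub_of_isMinOn_of_add_smul_sub (convex_Ici (0 : Fin m → ℝ)) (x := μs) hμs hμ
      (fun ν hν => hmin ν hν)
      (dualObjective_add_smul A B G (isHermitian_iff_isSymm.mp hH.inv.isHermitian) μs (μ - μs))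
  have hdiff : ξ μ - ξ μs = -(H⁻¹ *ᵥ u) := by
    have hcancel : (-(Aᵀ *ᵥ μ) - G) - (-(Aᵀ *ᵥ μs) - G) = -u := by
      simp only [u, mulVec_sub]; abel
    rw [hξ, hξ, ← mulVec_sub, hcancel, mulVec_neg]
  have hrayleigh := hH.isHermitian.iInf_eigenvalues_mul_dotProduct_self_le (H⁻¹ *ᵥ u)
  rw [inv_mulVec_dotProduct_mulVec_inv_mulVec hH.isUnit, ← hσ] at hrayleigh
  rw [hdiff, neg_dotProduct_neg, div_mul_eq_mul_div, le_div_iff₀ (hσ ▸ hH.iInf_eigenvalues_pos)]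
  linarith

/-- Primal–dual error bound: if `μ*` minimizes the dual objective
`f(μ) = ½(Aᵀμ+G)ᵀH⁻¹(Aᵀμ+G) + Bᵀμ` over `{μ ≥ 0}` and `ξ(μ) = H⁻¹(-Aᵀμ-G)`,
then for any feasible `μ ≥ 0`,
`‖ξ(μ) - ξ*‖² ≤ (2/σ_min(H)) (f(μ) - f(μ*))`. -/
theorem primal_dual_error_bound (n m : ℕ) (hn : 0 < n)
    (H : Matrix (Fin n) (Fin n) ℝ) (hH : H.PosDef)
    (A : Matrix (Fin m) (Fin n) ℝ) (B : Fin m → ℝ) (G : Fin n → ℝ)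
    (σ : ℝ) (hσ : σ = ⨅ i, hH.isHermitian.eigenvalues i)
    (f : (Fin m → ℝ) → ℝ)
    (hf : ∀ μ, f μ = (1 / 2) * ((Aᵀ.mulVec μ + G) ⬝ᵥ H⁻¹.mulVec (Aᵀ.mulVec μ + G))
        + B ⬝ᵥ μ)
    (ξ : (Fin m → ℝ) → (Fin n → ℝ))
    (hξ : ∀ μ, ξ μ = H⁻¹.mulVec (-(Aᵀ.mulVec μ) - G))
    (μs : Fin m → ℝ) (hμs : ∀ i, 0 ≤ μs i)
    (hmin : ∀ μ : Fin m → ℝ, (∀ i, 0 ≤ μ i) → f μs ≤ f μ) :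
    ∀ μ : Fin m → ℝ, (∀ i, 0 ≤ μ i) →
      (ξ μ - ξ μs) ⬝ᵥ (ξ μ - ξ μs) ≤ (2 / σ) * (f μ - f μs) :=
  primal_dual_error_bound_general n m H hH A B G σ hσ f hf ξ hξ μs hμs hmin
end

section
/- Let f : ℝ^m → ℝ be convex with L-Lipschitz gradient and g the indicator function of {μ : μ ≥ 0}. For ζ ∈ ℝ^m define p_L(ζ) = argmin_μ [g(μ) + (L/2)‖μ - (ζ - (1/L)∇f(ζ))‖²], which equals the componentwise maximum max{0, ζ - (1/L)∇f(ζ)}. Then for any feasible x ≥ 0: (2/L)·(F(x) - F(p_L(ζ))) ≥ ‖p_L(ζ) - ζ‖² + 2⟨p_L(ζ) - ζ, ζ - x⟩, where F = f + g. -/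
open scoped RealInnerProductSpace

/-!
Three inequalities are added up. Convexity bounds `f x` below by the linearization of `f` at
`ζ`; the `L`-Lipschitz gradient bounds `f p` above by the quadratic model
`f ζ + ⟪∇f ζ, p - ζ⟫ + (L/2)‖p - ζ‖²` (the descent lemma, by comparing derivatives along the
segment from `ζ` to `p`); and since `p = max 0 (ζ - ∇f ζ / L)` is the projection of the gradient
step onto the orthant, `⟪ζ - ∇f ζ / L - p, x - p⟫ ≤ 0` for every `x ≥ 0`. The same variational
inequality shows that `p` minimizes the distance to the gradient step over the orthant.
-/

open AffineMap

section Gradient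

variable {E : Type*} [NormedAddCommGroup E] [InnerProductSpace ℝ E] [CompleteSpace E]
  {f : E → ℝ} {f' : E → E}

lemma hasDerivAt_comp_lineMap (hgrad : ∀ x, HasGradientAt f (f' x) x) (a b : E) (t : ℝ) :
    HasDerivAt (f ∘ lineMap a b) ⟪f' (lineMap a b t), b - a⟫ t := by
  simpa using (hgrad _).hasFDerivAt.comp_hasDerivAt t hasDerivAt_lineMap

lemma ConvexOn.add_inner_gradient_le (hconv : ConvexOn ℝ Set.univ f)
    (hgrad : ∀ x, HasGradientAt f (f' x) x) (a b : E) :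
    f a + ⟪f' a, b - a⟫ ≤ f b := by
  have hline : ConvexOn ℝ Set.univ (f ∘ lineMap a b) := hconv.comp_affineMap _
  have := hline.le_slope_of_hasDerivAt (Set.mem_univ 0) (Set.mem_univ 1) zero_lt_one
    (hasDerivAt_comp_lineMap hgrad a b 0)
  simp only [Function.comp_apply, lineMap_apply_zero, lineMap_apply_one, slope_def_field,
    sub_zero, div_one] at this
  linarith

lemma le_add_inner_gradient_add_sq_of_lipschitz {L : ℝ} (hgrad : ∀ x, HasGradientAt f (f' x) x)
    (hlip : ∀ x y, ‖f' x - f' y‖ ≤ L * ‖x - y‖) (a b : E) :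
    f b ≤ f a + ⟪f' a, b - a⟫ + L / 2 * ‖b - a‖ ^ 2 := by
  have hquad (t : ℝ) :
      HasDerivAt (fun s : ℝ => f a + s * ⟪f' a, b - a⟫ + L / 2 * s ^ 2 * ‖b - a‖ ^ 2)
        (⟪f' a, b - a⟫ + L * t * ‖b - a‖ ^ 2) t := by
    refine ((((hasDerivAt_id' t).mul_const _).const_add (f a)).add
      (((hasDerivAt_pow 2 t).const_mul (L / 2)).mul_const (‖b - a‖ ^ 2))).congr_deriv ?_
    push_cast
    ring
  have hslope : ∀ t ∈ Set.Ico (0 : ℝ) 1,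
      ⟪f' (lineMap a b t), b - a⟫ ≤ ⟪f' a, b - a⟫ + L * t * ‖b - a‖ ^ 2 := by
    rintro t ⟨ht, -⟩
    have hdist : lineMap a b t - a = t • (b - a) := lineMap_vsub_left a b t
    have := calc ⟪f' (lineMap a b t) - f' a, b - a⟫
        _ ≤ ‖f' (lineMap a b t) - f' a‖ * ‖b - a‖ := real_inner_le_norm _ _
        _ ≤ L * ‖lineMap a b t - a‖ * ‖b - a‖ := by gcongr; exact hlip _ _
        _ = L * t * ‖b - a‖ ^ 2 := by rw [hdist, norm_smul, Real.norm_of_nonneg ht]; ring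
    rw [inner_sub_left] at this
    linarith
  have := image_le_of_deriv_right_le_deriv_boundary
    (fun t _ => (hasDerivAt_comp_lineMap hgrad a b t).continuousAt.continuousWithinAt)
    (fun t _ => (hasDerivAt_comp_lineMap hgrad a b t).hasDerivWithinAt)
    (by simp) (fun t _ => (hquad t).continuousAt.continuousWithinAt)
    (fun t _ => (hquad t).hasDerivWithinAt) hslope (Set.right_mem_Icc.2 zero_le_one)
  simpa using this

theorem prox_grad_inequality_of_inner_nonpos {L : ℝ} (hconv : ConvexOn ℝ Set.univ f)
    (hgrad : ∀ x, HasGradientAt f (f' x) x) (hL : 0 < L)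
    (hlip : ∀ x y, ‖f' x - f' y‖ ≤ L * ‖x - y‖) {ζ p x : E}
    (hp : ⟪(ζ - (1 / L) • f' ζ) - p, x - p⟫ ≤ 0) :
    (2 / L) * (f x - f p) ≥ ‖p - ζ‖ ^ 2 + 2 * ⟪p - ζ, ζ - x⟫ := by
  have hlower := hconv.add_inner_gradient_le hgrad ζ x
  have hupper := le_add_inner_gradient_add_sq_of_lipschitz hgrad hlip ζ p
  have hvar : L * ⟪ζ - p, x - p⟫ ≤ ⟪f' ζ, x - p⟫ := by
    rw [sub_right_comm, inner_sub_left, real_inner_smul_left, sub_nonpos, one_div_mul_eq_div,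
      le_div_iff₀ hL] at hp
    linarith
  have hsplit : ⟪ζ - p, x - p⟫ = ⟪p - ζ, ζ - x⟫ + ‖p - ζ‖ ^ 2 := by
    rw [← inner_neg_neg, neg_sub, neg_sub, show p - x = (ζ - x) + (p - ζ) by abel,
      inner_add_right, real_inner_self_eq_norm_sq]
  have hgrad_split : ⟪f' ζ, x - p⟫ = ⟪f' ζ, x - ζ⟫ - ⟪f' ζ, p - ζ⟫ := by
    rw [← inner_sub_right, sub_sub_sub_cancel_right]
  suffices L / 2 * (‖p - ζ‖ ^ 2 + 2 * ⟪p - ζ, ζ - x⟫) ≤ f x - f p by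
    rw [ge_iff_le, div_mul_eq_mul_div, le_div_iff₀ hL]
    linarith
  rw [hsplit, hgrad_split] at hvar
  linarith

end Gradient

lemma sq_norm_sub_le_of_inner_sub_nonpos {F : Type*} [NormedAddCommGroup F]
    [InnerProductSpace ℝ F] {v p μ : F} (h : ⟪v - p, μ - p⟫ ≤ 0) :
    ‖p - v‖ ^ 2 ≤ ‖μ - v‖ ^ 2 := by
  have hcross : ⟪μ - p, p - v⟫ = -⟪v - p, μ - p⟫ := by
    rw [real_inner_comm, ← inner_neg_left, neg_sub]
  rw [show μ - v = (μ - p) + (p - v) by abel, norm_add_sq_real, hcross]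
  nlinarith [sq_nonneg ‖μ - p‖]

lemma inner_sub_nonpos_of_eq_max_zero {ι : Type*} [Fintype ι] {v p x : EuclideanSpace ℝ ι}
    (hp : ∀ i, p i = max 0 (v i)) (hx : ∀ i, 0 ≤ x i) : ⟪v - p, x - p⟫ ≤ 0 := by
  rw [PiLp.inner_apply]
  refine Finset.sum_nonpos fun i _ => ?_
  simp only [PiLp.sub_apply, hp i, RCLike.inner_apply, conj_trivial]
  rcases le_total 0 (v i) with h | h
  · simp [max_eq_right h]
  · rw [max_eq_left h]
    nlinarith [hx i]

/-- Beck–Teboulle Lemma 2.3 specialized to the nonnegative orthant: for convex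
`f` with `L`-Lipschitz gradient, `ζ ∈ ℝᵐ`, and
`p_L(ζ) = max{0, ζ - (1/L)∇f(ζ)}` (the prox/projection step, which minimizes
`μ ↦ (L/2)‖μ - (ζ - (1/L)∇f(ζ))‖²` over `{μ ≥ 0}`), every feasible `x ≥ 0`
satisfies `(2/L)(F(x) - F(p_L ζ)) ≥ ‖p_L ζ - ζ‖² + 2⟨p_L ζ - ζ, ζ - x⟩`, where
`F = f` on the feasible set. -/
theorem prox_grad_descent_inequality (m : ℕ)
    (f : EuclideanSpace ℝ (Fin m) → ℝ) (f' : EuclideanSpace ℝ (Fin m) → EuclideanSpace ℝ (Fin m))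
    (hconv : ConvexOn ℝ Set.univ f)
    (hgrad : ∀ x, HasGradientAt f (f' x) x)
    (L : ℝ) (hL : 0 < L)
    (hlip : ∀ x y, ‖f' x - f' y‖ ≤ L * ‖x - y‖)
    (ζ : EuclideanSpace ℝ (Fin m))
    (pLζ : EuclideanSpace ℝ (Fin m))
    (hpL : ∀ i, pLζ i = max 0 (ζ i - (1 / L) * f' ζ i)) :
    ((∀ i, 0 ≤ pLζ i) ∧
      ∀ μ : EuclideanSpace ℝ (Fin m), (∀ i, 0 ≤ μ i) →
        (L / 2) * ‖pLζ - (ζ - (1 / L) • f' ζ)‖ ^ 2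
          ≤ (L / 2) * ‖μ - (ζ - (1 / L) • f' ζ)‖ ^ 2) ∧
    ∀ x : EuclideanSpace ℝ (Fin m), (∀ i, 0 ≤ x i) →
      (2 / L) * (f x - f pLζ) ≥ ‖pLζ - ζ‖ ^ 2 + 2 * ⟪pLζ - ζ, ζ - x⟫ := by
  have hproj : ∀ μ : EuclideanSpace ℝ (Fin m), (∀ i, 0 ≤ μ i) →
      ⟪(ζ - (1 / L) • f' ζ) - pLζ, μ - pLζ⟫ ≤ 0 :=
    fun μ hμ => inner_sub_nonpos_of_eq_max_zero (by simpa using hpL) hμ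
  refine ⟨⟨fun i => hpL i ▸ le_max_left _ _, fun μ hμ => ?_⟩, fun x hx => ?_⟩
  · exact mul_le_mul_of_nonneg_left (sq_norm_sub_le_of_inner_sub_nonpos (hproj μ hμ))
      (by positivity)
  · exact prox_grad_inequality_of_inner_nonpos hconv hgrad hL hlip (hproj x hx)
end

section
/- Let α ≥ 2 be an integer, L > 0, and let real sequences (v_p)_{p≥1} (nonnegative) and (κ_p)_{p≥1} (vectors in ℝ^m), and parameters (τ_p) with τ₁ = 1 and τ_{p+1}^α - τ_{p+1}^{α-1} = τ_p^α, satisfy: (2/L)τ_p^α v_p - (2/L)τ_{p+1}^α v_{p+1} ≥ ‖κ_{p+1}‖² - ‖κ_p‖² for all p ≥ 1, and (2/L)τ₁^α v₁ + ‖κ₁‖² ≤ C for some constant C ≥ 0. Then (2/L)τ_p^α v_p ≤ C for all p ≥ 1, and hence v_p ≤ L·C·α^α / (2(p+α-1)^α), using the bound τ_p ≥ (p+α-1)/α. -/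
/-- Abstract sequence lemma giving the `O(1/p^α)` rate: if
`(2/L)τ_p^α v_p - (2/L)τ_{p+1}^α v_{p+1} ≥ ‖κ_{p+1}‖² - ‖κ_p‖²` for all `p ≥ 1`
and `(2/L)τ₁^α v₁ + ‖κ₁‖² ≤ C`, with `τ₁ = 1` and `τ_{p+1}` the positive root of
`x^α - x^(α-1) = τ_p^α`, then `(2/L)τ_p^α v_p ≤ C` and
`v_p ≤ L C α^α / (2(p+α-1)^α)` for all `p ≥ 1`. -/
theorem abstract_rate_lemma (α : ℕ) (hα : 2 ≤ α) (m : ℕ) (L : ℝ) (hL : 0 < L)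
    (v : ℕ → ℝ) (κ : ℕ → EuclideanSpace ℝ (Fin m)) (τ : ℕ → ℝ)
    (hv : ∀ p : ℕ, 1 ≤ p → 0 ≤ v p)
    (h1 : τ 1 = 1)
    (hrec : ∀ p : ℕ, 1 ≤ p →
      0 < τ (p + 1) ∧ τ (p + 1) ^ α - τ (p + 1) ^ (α - 1) = τ p ^ α)
    (hineq : ∀ p : ℕ, 1 ≤ p →
      (2 / L) * τ p ^ α * v p - (2 / L) * τ (p + 1) ^ α * v (p + 1)
        ≥ ‖κ (p + 1)‖ ^ 2 - ‖κ p‖ ^ 2)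
    (C : ℝ) (hC : 0 ≤ C)
    (hinit : (2 / L) * τ 1 ^ α * v 1 + ‖κ 1‖ ^ 2 ≤ C) :
    ∀ p : ℕ, 1 ≤ p →
      (2 / L) * τ p ^ α * v p ≤ C ∧
      v p ≤ L * C * (α : ℝ) ^ α / (2 * ((p : ℝ) + α - 1) ^ α) := by
  have hαR : (2:ℝ) ≤ (α:ℝ) := by exact_mod_cast hα
  have hα0 : (0:ℝ) < (α:ℝ) := by linarith
  have hαsub : α - 1 + 1 = α := by omega
  -- Lyapunov-type decay
  have hLyap : ∀ p : ℕ, 1 ≤ p → (2 / L) * τ p ^ α * v p + ‖κ p‖ ^ 2 ≤ C := by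
    intro p hp
    induction p with
    | zero => omega
    | succ n ih =>
      rcases Nat.lt_or_ge 1 (n + 1) with h | h
      · have hn : 1 ≤ n := by omega
        have := hineq n hn
        have := ih hn
        linarith
      · have hn : n = 0 := by omega
        subst hn
        exact hinit
  -- lower bound on τ
  have hτlb : ∀ p : ℕ, 1 ≤ p → ((p:ℝ) + (α:ℝ) - 1) / (α:ℝ) ≤ τ p := by
    intro p hp
    induction p with
    | zero => omega
    | succ n ih =>
      rcases Nat.lt_or_ge 1 (n + 1) with h | h
      · have hn : 1 ≤ n := by omega
        have ihn := ih hn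
        obtain ⟨hpos, hrec'⟩ := hrec n hn
        set a : ℝ := (n:ℝ) + (α:ℝ) - 1 with ha
        have hnR : (1:ℝ) ≤ (n:ℝ) := by exact_mod_cast hn
        have ha2 : (2:ℝ) ≤ a := by simp [ha]; linarith
        set c : ℝ := (a + 1) / (α:ℝ) with hc
        have hc1 : 1 < c := by
          rw [hc, lt_div_iff₀ hα0]
          simp [ha]; linarith
        -- goal : ((n+1 : ℕ):ℝ + α - 1)/α ≤ τ (n+1)
        have hgoal : ((↑(n+1):ℝ) + (α:ℝ) - 1) / (α:ℝ) = c := by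
          push_cast [hc, ha]; ring
        rw [hgoal]
        -- τ n ≥ a/α ≥ 0
        have haα : (0:ℝ) ≤ a / (α:ℝ) := by positivity
        have hτn : (a / (α:ℝ)) ^ α ≤ τ n ^ α := by
          apply pow_le_pow_left₀ haα
          have := ih hn
          exact this
        -- key combinatorial inequality: c^(α-1) * (c - 1) ≤ (a/α)^α
        have hkey : c ^ (α - 1) * (c - 1) ≤ (a / (α:ℝ)) ^ α := by
          -- reduces to (a+1)^(α-1) * (a - (α-1)) ≤ a^α
          have ha0 : (0:ℝ) < a := by linarith
          have hstep : (a + 1) ^ (α - 1) * (a - ((α:ℝ) - 1)) ≤ a ^ α := by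
            -- Bernoulli: (1 - 1/a)^(α-1) ≥ 1 - (α-1)/a, so
            -- a^(α-2) * (a - (α-1)) ≤ (a-1)^(α-1)
            have hb : a ^ (α - 2) * (a - ((α:ℝ) - 1)) ≤ (a - 1) ^ (α - 1) := by
              have ht : (-2:ℝ) ≤ -1/a := by
                rw [le_div_iff₀ ha0]; linarith
              have hber := one_add_mul_le_pow ht (α - 1)
              -- 1 + (α-1) * (-1/a) ≤ (1 - 1/a)^(α-1)
              have h1a : (1:ℝ) + (-1/a) = (a - 1)/a := by field_simp; ring
              rw [h1a] at hber
              have hcast : ((α - 1 : ℕ):ℝ) = (α:ℝ) - 1 := by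
                push_cast [Nat.cast_sub (by omega : 1 ≤ α)]; ring
              rw [hcast] at hber
              -- multiply both sides by a^(α-1)
              have hpa : (0:ℝ) < a ^ (α - 1) := pow_pos ha0 _
              have := mul_le_mul_of_nonneg_left hber (le_of_lt hpa)
              have hrhs : a ^ (α - 1) * ((a - 1)/a) ^ (α - 1) = (a - 1) ^ (α - 1) := by
                rw [div_pow]
                field_simp
              rw [hrhs] at this
              calc a ^ (α - 2) * (a - ((α:ℝ) - 1))
                  = a ^ (α - 1) * (1 + ((α:ℝ) - 1) * (-1/a)) := by
                    have : a ^ (α - 1) = a ^ (α - 2) * a := by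
                      rw [← pow_succ]
                      congr 1
                      omega
                    rw [this]
                    field_simp
                    ring
                _ ≤ (a - 1) ^ (α - 1) := this
            -- (a-1)^(α-1) * (a+1)^(α-1) ≤ (a^2)^(α-1) = a^(2α-2)
            have hmul : (a - 1) ^ (α - 1) * (a + 1) ^ (α - 1) ≤ (a ^ 2) ^ (α - 1) := by
              rw [← mul_pow]
              apply pow_le_pow_left₀ (by nlinarith)
              nlinarith
            -- combine and cancel a^(α-2)
            have hexp : (a ^ 2) ^ (α - 1) = a ^ (α - 2) * a ^ α := by
              rw [← pow_mul, ← pow_add]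
              congr 1
              omega
            have hchain : a ^ (α - 2) * ((a + 1) ^ (α - 1) * (a - ((α:ℝ) - 1)))
                ≤ a ^ (α - 2) * a ^ α := by
              have hp1 : (0:ℝ) ≤ (a + 1) ^ (α - 1) := by positivity
              calc a ^ (α - 2) * ((a + 1) ^ (α - 1) * (a - ((α:ℝ) - 1)))
                  = (a + 1) ^ (α - 1) * (a ^ (α - 2) * (a - ((α:ℝ) - 1))) := by ring
                _ ≤ (a + 1) ^ (α - 1) * (a - 1) ^ (α - 1) :=
                    mul_le_mul_of_nonneg_left hb hp1
                _ = (a - 1) ^ (α - 1) * (a + 1) ^ (α - 1) := by ring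
                _ ≤ (a ^ 2) ^ (α - 1) := hmul
                _ = a ^ (α - 2) * a ^ α := hexp
            have hpa2 : (0:ℝ) < a ^ (α - 2) := pow_pos ha0 _
            exact le_of_mul_le_mul_left hchain hpa2
          -- now divide by α^α
          have hαα : (0:ℝ) < (α:ℝ) ^ α := pow_pos hα0 _
          rw [div_pow]
          rw [hc]
          have hcm1 : (a + 1) / (α:ℝ) - 1 = (a + 1 - (α:ℝ)) / (α:ℝ) := by
            field_simp
          rw [hcm1, div_pow, div_mul_div_comm, div_le_div_iff₀ (by positivity) hαα]
          have hαexp : (α:ℝ) ^ (α - 1) * (α:ℝ) = (α:ℝ) ^ α := by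
            rw [← pow_succ, hαsub]
          calc (a + 1) ^ (α - 1) * (a + 1 - (α:ℝ)) * (α:ℝ) ^ α
              = ((a + 1) ^ (α - 1) * (a - ((α:ℝ) - 1))) * (α:ℝ) ^ α := by ring
            _ ≤ a ^ α * (α:ℝ) ^ α := by
                apply mul_le_mul_of_nonneg_right hstep (le_of_lt hαα)
            _ = a ^ α * ((α:ℝ) ^ (α - 1) * (α:ℝ)) := by rw [hαexp]
          -- done
        -- τ(n+1)^(α-1) * (τ(n+1) - 1) = τ n ^ α ≥ (a/α)^α ≥ c^(α-1)(c-1)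
        have hfτ : τ (n+1) ^ (α - 1) * (τ (n+1) - 1) = τ n ^ α := by
          rw [← hrec']
          have : τ (n+1) ^ α = τ (n+1) ^ (α - 1) * τ (n+1) := by
            rw [← pow_succ]; congr 1; omega
          rw [this]; ring
        by_contra hlt
        push_neg at hlt
        have hτpos : (0:ℝ) < τ (n+1) := hpos
        have hfge : c ^ (α - 1) * (c - 1) ≤ τ (n+1) ^ (α - 1) * (τ (n+1) - 1) := by
          rw [hfτ]; exact le_trans hkey hτn
        have hcpos : (0:ℝ) < c ^ (α - 1) * (c - 1) := by
          have h2 : (0:ℝ) < (a / (α:ℝ)) ^ α := by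
            apply pow_pos; positivity
          apply mul_pos (pow_pos (by linarith) _) (by linarith)
        rcases le_or_gt (τ (n+1)) 1 with hle | hgt
        · have : τ (n+1) ^ (α - 1) * (τ (n+1) - 1) ≤ 0 := by
            apply mul_nonpos_of_nonneg_of_nonpos
            · positivity
            · linarith
          linarith
        · have h1' : τ (n+1) ^ (α - 1) < c ^ (α - 1) := by
            apply pow_lt_pow_left₀ hlt (le_of_lt hτpos)
            omega
          have : τ (n+1) ^ (α - 1) * (τ (n+1) - 1) < c ^ (α - 1) * (c - 1) := by
            calc τ (n+1) ^ (α - 1) * (τ (n+1) - 1)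
                ≤ c ^ (α - 1) * (τ (n+1) - 1) := by
                  apply mul_le_mul_of_nonneg_right (le_of_lt h1') (by linarith)
              _ < c ^ (α - 1) * (c - 1) := by
                  apply mul_lt_mul_of_pos_left (by linarith)
                  apply pow_pos (by linarith)
          linarith
      · have hn : n = 0 := by omega
        subst hn
        rw [h1]
        push_cast
        rw [div_le_one hα0]
        linarith
  -- conclude
  intro p hp
  have hA : (2 / L) * τ p ^ α * v p ≤ C := by
    have := hLyap p hp
    have hκ : (0:ℝ) ≤ ‖κ p‖ ^ 2 := by positivity
    linarith
  refine ⟨hA, ?_⟩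
  set b : ℝ := ((p:ℝ) + (α:ℝ) - 1) / (α:ℝ) with hb
  have hpR : (1:ℝ) ≤ (p:ℝ) := by exact_mod_cast hp
  have hbpos : (0:ℝ) < b := by
    rw [hb]; apply div_pos (by linarith) hα0
  have hτb : b ≤ τ p := hτlb p hp
  have hvpos := hv p hp
  have h2L : (0:ℝ) < 2 / L := by positivity
  have hbound : (2 / L) * b ^ α * v p ≤ C := by
    have hpow : b ^ α ≤ τ p ^ α := pow_le_pow_left₀ (le_of_lt hbpos) hτb _
    calc (2 / L) * b ^ α * v p ≤ (2 / L) * τ p ^ α * v p := by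
          apply mul_le_mul_of_nonneg_right _ hvpos
          exact mul_le_mul_of_nonneg_left hpow (le_of_lt h2L)
      _ ≤ C := hA
  have hden : (0:ℝ) < 2 * ((p:ℝ) + (α:ℝ) - 1) ^ α := by
    apply mul_pos (by norm_num)
    apply pow_pos (by linarith)
  rw [le_div_iff₀ hden]
  have hbα : b ^ α = ((p:ℝ) + (α:ℝ) - 1) ^ α / (α:ℝ) ^ α := by
    rw [hb, div_pow]
  have hαα : (0:ℝ) < (α:ℝ) ^ α := pow_pos hα0 _
  -- from hbound : (2/L) * (P/A) * v ≤ C with P = (p+α-1)^α, A = α^α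
  rw [hbα] at hbound
  have : 2 / L * (((p:ℝ) + (α:ℝ) - 1) ^ α / (α:ℝ) ^ α) * v p * (L * (α:ℝ) ^ α)
      ≤ C * (L * (α:ℝ) ^ α) := by
    apply mul_le_mul_of_nonneg_right hbound
    positivity
  have hsimp : 2 / L * (((p:ℝ) + (α:ℝ) - 1) ^ α / (α:ℝ) ^ α) * v p * (L * (α:ℝ) ^ α)
      = v p * (2 * ((p:ℝ) + (α:ℝ) - 1) ^ α) := by
    field_simp
  rw [hsimp] at this
  linarith
end
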